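/- arXiv:2010.05283 — 2 statements merged into one kernel-verified Lean document; each statement's English description precedes it below -/
import Mathlib

section
/- Let a be a monic polynomial of degree n ≥ 1 with roots α_1,…,α_n over a field F and r ≥ 1. Then the polynomial f_a(T_1,…,T_r) is symmetric in the variables T_1,…,T_r: for every permutation σ of {1,…,r}, f_a(T_{σ(1)},…,T_{σ(r)}) = f_a(T_1,…,T_r). -/
/-- The polynomial `f_a` attached to a monic polynomial `a` of degree `n`
with roots `α 0, …, α (n-1)` (with multiplicity):
`f_a(T_1,…,T_r) = Σ_{1=i_0 ≤ i_1 ≤ ⋯ ≤ i_r = n} ∏_{j=1}^r ∏_{i ∉ [i_{j-1}, i_j]} (T_j - α_i)`. -/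
noncomputable def fa (F : Type*) [CommRing F] (r n : ℕ) (α : Fin n → F) :
    MvPolynomial (Fin r) F :=
  ∑ c ∈ Finset.univ.filter (fun c : Fin (r + 1) → Fin n =>
      (∀ i j, i ≤ j → c i ≤ c j) ∧ (c 0 : ℕ) = 0 ∧ (c (Fin.last r) : ℕ) = n - 1),
    ∏ j : Fin r,
      ∏ i ∈ Finset.univ.filter (fun i : Fin n =>
          ¬(c (Fin.castSucc j) ≤ i ∧ i ≤ c (Fin.succ j))),
        (MvPolynomial.X j - MvPolynomial.C (α i))

/-!
`f_a(T_1, …, T_r)` is the `(1, n)` entry of the product `M(T_1) ⋯ M(T_r)` of the upper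
triangular transfer matrices `M(T)_{ab} = ∏_{i ∉ [a, b]} (T - α_i)` (for `a ≤ b`), so it suffices
that `M(x)` and `M(y)` commute for `x ≠ y`. After pulling out the symmetric factor
`M(x)_{ab} M(y)_{ab}`, the entry `(M(x) M(y))_{ab}` becomes the divided difference
`Σ_m ∏_{m < i ≤ b} (x - α_i) ∏_{a ≤ i < m} (y - α_i)`
`  = (∏_{a ≤ i ≤ b} (x - α_i) - ∏_{a ≤ i ≤ b} (y - α_i)) / (x - y)`,
which is symmetric in `x` and `y`.
-/

open Finset MvPolynomial

namespace Matrix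

variable {S : Type*} [CommSemiring S] {n : ℕ}

theorem list_prod_ofFn_apply {r : ℕ} (M : Fin r → Matrix (Fin n) (Fin n) S) (a b : Fin n) :
    (List.ofFn M).prod a b = ∑ c ∈ univ.filter (fun c : Fin (r + 1) → Fin n =>
      c 0 = a ∧ c (Fin.last r) = b), ∏ k, M k (c k.castSucc) (c k.succ) := by
  induction r generalizing a with
  | zero =>
    rw [sum_filter, ← (Equiv.funUnique (Fin 1) (Fin n)).symm.sum_comp]
    simp [one_apply, ite_and]
  | succ r ih =>
    simp only [List.ofFn_succ, List.prod_cons, mul_apply, ih, mul_sum, sum_filter]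
    rw [← (Fin.consEquiv fun _ => Fin n).sum_comp, Fintype.sum_prod_type, sum_comm]
    simp [Fin.prod_univ_succ, ite_and]

end Matrix

namespace FaSymmetric

variable {R : Type*} [CommRing R]

def newtonProd (β : ℕ → R) (x : R) (s t : ℕ) : R := ∏ i ∈ Ico s t, (x - β i)

theorem newtonProd_mul_newtonProd (β : ℕ → R) (x : R) {s m t : ℕ} (hsm : s ≤ m)
    (hmt : m ≤ t) :
    newtonProd β x s m * newtonProd β x m t = newtonProd β x s t :=
  prod_Ico_consecutive _ hsm hmt

theorem newtonProd_succ (β : ℕ → R) (x : R) {s t : ℕ} (hst : s ≤ t) :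
    newtonProd β x s (t + 1) = newtonProd β x s t * (x - β t) :=
  prod_Ico_succ_top hst _

theorem sub_mul_sum_newtonProd (β : ℕ → R) (x y : R) (a b : ℕ) :
    (x - y) * ∑ m ∈ Ico a b, newtonProd β x (m + 1) b * newtonProd β y a m
      = newtonProd β x a b - newtonProd β y a b := by
  rcases lt_or_ge b a with hba | hab
  · simp [newtonProd, Ico_eq_empty_of_le hba.le]
  induction b, hab using Nat.le_induction with
  | base => simp [newtonProd]
  | succ b hab ih =>
    have hsplit : ∀ m ∈ Ico a b, newtonProd β x (m + 1) (b + 1) * newtonProd β y a m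
        = (x - β b) * (newtonProd β x (m + 1) b * newtonProd β y a m) := fun m hm => by
      rw [newtonProd_succ β x (mem_Ico.1 hm).2]; ring
    rw [sum_Ico_succ_top hab, sum_congr rfl hsplit, ← mul_sum, newtonProd_succ β x hab,
      newtonProd_succ β y hab, newtonProd, Ico_self, prod_empty]
    linear_combination (x - β b) * ih

theorem sum_newtonProd_comm [IsDomain R] (β : ℕ → R) {x y : R} (hxy : x ≠ y) (a b : ℕ) :
    ∑ m ∈ Ico a b, newtonProd β x (m + 1) b * newtonProd β y a m
      = ∑ m ∈ Ico a b, newtonProd β y (m + 1) b * newtonProd β x a m := by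
  refine mul_left_cancel₀ (sub_ne_zero.2 hxy) ?_
  linear_combination sub_mul_sum_newtonProd β x y a b + sub_mul_sum_newtonProd β y x a b

variable {n : ℕ}

def outsideProd (γ : Fin n → R) (x : R) (a b : Fin n) : R :=
  ∏ i ∈ univ.filter (fun i => ¬(a ≤ i ∧ i ≤ b)), (x - γ i)

theorem outsideProd_eq_newtonProd {γ : Fin n → R} {β : ℕ → R}
    (hβ : ∀ i : Fin n, β i = γ i) (x : R) {a b : Fin n} (hab : a ≤ b) :
    outsideProd γ x a b = newtonProd β x 0 a * newtonProd β x (b + 1) n := by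
  have hbn : (b : ℕ) + 1 ≤ n := b.isLt
  set g : ℕ → R := fun i => if (a : ℕ) ≤ i ∧ i ≤ b then 1 else x - β i
  have hg : ∀ s t, (∀ i ∈ Ico s t, ¬((a : ℕ) ≤ i ∧ i ≤ b)) →
      ∏ i ∈ Ico s t, g i = newtonProd β x s t :=
    fun s t h => prod_congr rfl fun i hi => if_neg (h i hi)
  calc outsideProd γ x a b = ∏ i : Fin n, g i := by
        rw [outsideProd, prod_filter]
        refine prod_congr rfl fun i _ => ?_
        simp only [g, hβ, Fin.le_def, ite_not]
    _ = (∏ i ∈ Ico 0 (a : ℕ), g i) * (∏ i ∈ Ico (a : ℕ) (b + 1), g i) *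
          ∏ i ∈ Ico ((b : ℕ) + 1) n, g i := by
        rw [Fin.prod_univ_eq_prod_range, range_eq_Ico,
          ← prod_Ico_consecutive _ (Nat.zero_le _) hbn,
          ← prod_Ico_consecutive _ (Nat.zero_le a) (by omega)]
    _ = newtonProd β x 0 a * newtonProd β x (b + 1) n := by
        rw [hg 0 a (fun i hi => by simp at hi; omega),
          prod_eq_one (fun i hi => if_pos (by simp at hi; omega)),
          hg (b + 1) n (fun i hi => by simp at hi; omega), mul_one]

theorem outsideProd_mul_outsideProd {γ : Fin n → R} {β : ℕ → R}
    (hβ : ∀ i : Fin n, β i = γ i) (x y : R) {a m b : Fin n} (ham : a ≤ m)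
    (hmb : m ≤ b) :
    outsideProd γ x a m * outsideProd γ y m b = outsideProd γ x a b * outsideProd γ y a b *
      (newtonProd β x (m + 1) (b + 1) * newtonProd β y a m) := by
  have hbn : (b : ℕ) + 1 ≤ n := b.isLt
  have hmb' : (m : ℕ) + 1 ≤ b + 1 := by simpa using hmb
  rw [outsideProd_eq_newtonProd hβ x ham, outsideProd_eq_newtonProd hβ y hmb,
    outsideProd_eq_newtonProd hβ x (ham.trans hmb),
    outsideProd_eq_newtonProd hβ y (ham.trans hmb), ← newtonProd_mul_newtonProd β x hmb' hbn,
    ← newtonProd_mul_newtonProd β y (Nat.zero_le a) ham]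
  ring

theorem sum_outsideProd_mul_comm [IsDomain R] (γ : Fin n → R) {x y : R} (hxy : x ≠ y)
    (a b : Fin n) :
    ∑ m ∈ Icc a b, outsideProd γ x a m * outsideProd γ y m b
      = ∑ m ∈ Icc a b, outsideProd γ y a m * outsideProd γ x m b := by
  obtain ⟨β, hβ⟩ : ∃ β : ℕ → R, ∀ i : Fin n, β i = γ i :=
    ⟨fun i => if h : i < n then γ ⟨i, h⟩ else 0, fun i => dif_pos i.isLt⟩
  have factor : ∀ x y : R, ∑ m ∈ Icc a b, outsideProd γ x a m * outsideProd γ y m b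
      = outsideProd γ x a b * outsideProd γ y a b *
        ∑ m ∈ Ico (a : ℕ) (b + 1), newtonProd β x (m + 1) (b + 1) * newtonProd β y a m := by
    intro x y
    rw [mul_sum, Ico_add_one_right_eq_Icc, ← Fin.map_valEmbedding_Icc, sum_map]
    exact sum_congr rfl fun m hm =>
      outsideProd_mul_outsideProd hβ x y (mem_Icc.1 hm).1 (mem_Icc.1 hm).2
  rw [factor x y, factor y x, sum_newtonProd_comm β hxy, mul_comm (outsideProd γ x a b)]

def transferMatrix (γ : Fin n → R) (x : R) : Matrix (Fin n) (Fin n) R :=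
  Matrix.of fun a b => if a ≤ b then outsideProd γ x a b else 0

theorem transferMatrix_mul_apply (γ : Fin n → R) (x y : R) (a b : Fin n) :
    (transferMatrix γ x * transferMatrix γ y) a b
      = ∑ m ∈ Icc a b, outsideProd γ x a m * outsideProd γ y m b := by
  simp only [transferMatrix, Matrix.mul_apply, Matrix.of_apply, ite_zero_mul_ite_zero,
    ← sum_filter, filter_le_le_eq_Icc]

theorem commute_transferMatrix [IsDomain R] (γ : Fin n → R) {x y : R} (hxy : x ≠ y) :
    Commute (transferMatrix γ x) (transferMatrix γ y) :=
  Matrix.ext fun a b => by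
    rw [transferMatrix_mul_apply, transferMatrix_mul_apply, sum_outsideProd_mul_comm γ hxy]

def chainSum {r : ℕ} (γ : Fin n → R) (x : Fin r → R) : R :=
  ∑ c ∈ univ.filter (fun c : Fin (r + 1) → Fin n =>
      (∀ i j, i ≤ j → c i ≤ c j) ∧ (c 0 : ℕ) = 0 ∧ (c (Fin.last r) : ℕ) = n - 1),
    ∏ j, outsideProd γ (x j) (c j.castSucc) (c j.succ)

theorem chainSum_eq_list_prod_apply {r : ℕ} (γ : Fin (n + 1) → R) (x : Fin r → R) :
    chainSum γ x = (List.ofFn fun k => transferMatrix γ (x k)).prod 0 (Fin.last n) := by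
  rw [Matrix.list_prod_ofFn_apply, chainSum, sum_filter, sum_filter]
  refine sum_congr rfl fun c _ => ?_
  have hchain :
      ((∀ i j, i ≤ j → c i ≤ c j) ∧ (c 0 : ℕ) = 0 ∧
          (c (Fin.last r) : ℕ) = n + 1 - 1) ↔
        (c 0 = 0 ∧ c (Fin.last r) = Fin.last n) ∧ ∀ k : Fin r, c k.castSucc ≤ c k.succ := by
    rw [← Fin.monotone_iff_le_succ, Fin.ext_iff, Fin.ext_iff, Fin.val_zero, Fin.val_last,
      Nat.add_sub_cancel]
    exact ⟨fun ⟨hc, h0, hl⟩ => ⟨⟨h0, hl⟩, fun i j hij => hc i j hij⟩,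
      fun ⟨⟨h0, hl⟩, hc⟩ => ⟨fun i j hij => hc hij, h0, hl⟩⟩
  simp only [transferMatrix, Matrix.of_apply, Fintype.prod_ite_zero, hchain, ite_and]
  -- the two sides differ only in the `Decidable` instance of the `∀`
  congr

theorem chainSum_comp_perm [IsDomain R] {r : ℕ} (γ : Fin n → R) {x : Fin r → R}
    (hx : Function.Injective x) (σ : Equiv.Perm (Fin r)) :
    chainSum γ (x ∘ σ) = chainSum γ x := by
  cases n with
  | zero => simp [chainSum]
  | succ n =>
    rw [chainSum_eq_list_prod_apply, chainSum_eq_list_prod_apply]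
    refine congrFun (congrFun ((σ.ofFn_comp_perm (transferMatrix γ ∘ x)).prod_eq' ?_) 0) _
    exact List.pairwise_ofFn.2 fun i j hij =>
      commute_transferMatrix γ (hx.ne (σ.injective.ne hij.ne))

theorem rename_fa_eq_chainSum {F τ : Type*} [CommRing F] {r n : ℕ} (α : Fin n → F)
    (f : Fin r → τ) : rename f (fa F r n α) = chainSum (C ∘ α) (X ∘ f) := by
  simp only [fa, chainSum, outsideProd, map_sum, map_prod, map_sub, rename_X, rename_C,
    Function.comp_apply]

end FaSymmetric

theorem fa_symmetric_general (F : Type*) [Field F] (r n : ℕ)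
    (α : Fin n → F) (σ : Equiv.Perm (Fin r)) :
    MvPolynomial.rename σ (fa F r n α) = fa F r n α := by
  rw [FaSymmetric.rename_fa_eq_chainSum, FaSymmetric.chainSum_comp_perm _ X_injective σ]
  rfl

theorem fa_symmetric (F : Type*) [Field F] (r n : ℕ) (hn : 1 ≤ n) (hr : 1 ≤ r)
    (α : Fin n → F) (σ : Equiv.Perm (Fin r)) :
    MvPolynomial.rename σ (fa F r n α) = fa F r n α :=
  fa_symmetric_general F r n α σ
end

section
/- Let a be a monic polynomial of degree n ≥ 1 with roots α_1,…,α_n over a field F and r ≥ 1. For σ a permutation of {1,…,n}, let f_a^σ be defined with roots listed in the order α_{σ(1)},…,α_{σ(n)}. Then f_a^σ = f_a; i.e., the polynomial f_a is independent of the ordering chosen for the roots of a. -/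
/-!
For `u ≤ v` let `M_j u v = ∏_{i ∉ [u, v]} (T_j - α_i)`, and `M_j u v = 0` for `u > v`. The
chains in the definition of `f_a` are the index paths of the matrix product along which no factor
vanishes, so `f_a = (M_1 ⋯ M_r) 0 (n-1)`. Swapping two adjacent roots `α_k, α_{k+1}` intertwines
every `M_j` with its swapped version `M_j'` through one transvection
`S = 1 + (α_k - α_{k+1}) E_{k+1,k}`: `M_j' S = S M_j`, hence `(M_1' ⋯ M_r') S = S (M_1 ⋯ M_r)`.
Since `S` agrees with the identity in row `0` and in column `n-1`, the corner entry does not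
change, and adjacent transpositions generate the symmetric group.
-/

open Finset Matrix Equiv

theorem Matrix.list_prod_ofFn_apply_s6 {ι R : Type*} [Fintype ι] [DecidableEq ι] [CommSemiring R]
    {r : ℕ} (M : Fin r → Matrix ι ι R) (a b : ι) :
    (List.ofFn M).prod a b = ∑ c ∈ univ.filter (fun c : Fin (r + 1) → ι =>
      c 0 = a ∧ c (Fin.last r) = b), ∏ j, M j (c j.castSucc) (c j.succ) := by
  induction r generalizing a with
  | zero =>
    rw [List.ofFn_zero, List.prod_nil, one_apply, sum_filter,
      ← (Equiv.funUnique (Fin 1) ι).symm.sum_comp]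
    rcases eq_or_ne a b with rfl | hab
    · simp
    · rw [if_neg hab]
      exact (sum_eq_zero fun x _ => if_neg fun h => hab (h.1.symm.trans h.2)).symm
  | succ r ih =>
    rw [List.ofFn_succ, List.prod_cons, mul_apply, sum_filter,
      ← (Fin.consEquiv fun _ => ι).sum_comp, Fintype.sum_prod_type]
    simp_rw [ih, mul_sum, sum_filter]
    rw [sum_comm]
    simp [Fin.prod_univ_succ, ite_and, Fin.consEquiv]

theorem SemiconjBy.list_prod_ofFn {M : Type*} [Monoid M] {r : ℕ} {a : M} {x y : Fin r → M}
    (h : ∀ j, SemiconjBy a (x j) (y j)) :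
    SemiconjBy a (List.ofFn x).prod (List.ofFn y).prod := by
  induction r with
  | zero => exact SemiconjBy.one_right a
  | succ r ih =>
    rw [List.ofFn_succ, List.ofFn_succ, List.prod_cons, List.prod_cons]
    exact (h 0).mul_right (ih fun j => h j.succ)

theorem Matrix.apply_eq_of_mul_transvection_eq {ι R : Type*} [Fintype ι] [DecidableEq ι]
    [CommRing R] {P Q : Matrix ι ι R} {p q : ι} {c : R}
    (h : Q * transvection p q c = transvection p q c * P) {u v : ι} (hu : u ≠ p) (hv : v ≠ q) :
    Q u v = P u v := by
  simpa [transvection, Matrix.mul_add, Matrix.add_mul, mul_single_apply_of_ne _ _ _ _ _ hv,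
    single_mul_apply_of_ne _ _ _ _ _ hu] using congrFun (congrFun h u) v

section FinIntervals
variable {M : Type*} [CommMonoid M] {m : ℕ}

theorem Fin.prod_Iio_succ (f : Fin (m + 1) → M) (k : Fin m) :
    ∏ i ∈ Iio k.succ, f i = (∏ i ∈ Iio k.castSucc, f i) * f k.castSucc := by
  rw [mul_comm, ← prod_insert (by simp)]
  congr 1
  ext i
  simp only [mem_insert, mem_Iio, Fin.lt_def, Fin.ext_iff, Fin.val_castSucc, Fin.val_succ]
  omega

theorem Fin.prod_Ioi_castSucc (f : Fin (m + 1) → M) (k : Fin m) :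
    ∏ i ∈ Ioi k.castSucc, f i = f k.succ * ∏ i ∈ Ioi k.succ, f i := by
  rw [← prod_insert (by simp)]
  congr 1
  ext i
  simp only [mem_insert, mem_Ioi, Fin.lt_def, Fin.ext_iff, Fin.val_castSucc, Fin.val_succ]
  omega

theorem Fin.prod_Iio_comp_swap (f : Fin (m + 1) → M) (k : Fin m) {u : Fin (m + 1)}
    (hu : u ≠ k.succ) :
    ∏ i ∈ Iio u, f (swap k.castSucc k.succ i) = ∏ i ∈ Iio u, f i := by
  refine prod_equiv (swap k.castSucc k.succ) (fun i => ?_) fun _ _ => rfl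
  rw [Fin.ne_iff_vne] at hu
  simp only [mem_Iio, Fin.lt_def, swap_apply_def, Fin.ext_iff]
  split_ifs <;> simp_all <;> omega

theorem Fin.prod_Ioi_comp_swap (f : Fin (m + 1) → M) (k : Fin m) {v : Fin (m + 1)}
    (hv : v ≠ k.castSucc) :
    ∏ i ∈ Ioi v, f (swap k.castSucc k.succ i) = ∏ i ∈ Ioi v, f i := by
  refine prod_equiv (swap k.castSucc k.succ) (fun i => ?_) fun _ _ => rfl
  rw [Fin.ne_iff_vne] at hv
  simp only [mem_Ioi, Fin.lt_def, swap_apply_def, Fin.ext_iff]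
  split_ifs <;> simp_all <;> omega

end FinIntervals

section TransferMatrix
variable {R : Type*} [CommRing R] {m n : ℕ}

def transferMatrix (t : R) (a : Fin n → R) : Matrix (Fin n) (Fin n) R :=
  of fun u v => if u ≤ v then ∏ i ∈ univ.filter (fun i => ¬(u ≤ i ∧ i ≤ v)), (t - a i) else 0

theorem transferMatrix_apply_of_le (t : R) (a : Fin n → R) {u v : Fin n} (h : u ≤ v) :
    transferMatrix t a u v = (∏ i ∈ Iio u, (t - a i)) * ∏ i ∈ Ioi v, (t - a i) := by
  rw [transferMatrix, of_apply, if_pos h,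
    ← prod_union <| disjoint_left.2 fun i hu hv =>
      (mem_Iio.1 hu).not_ge (h.trans (mem_Ioi.1 hv).le)]
  congr 1
  ext i
  simp only [mem_filter, mem_univ, true_and, mem_union, mem_Iio, mem_Ioi, not_and_or, not_le]

theorem transferMatrix_apply_of_lt (t : R) (a : Fin n → R) {u v : Fin n} (h : v < u) :
    transferMatrix t a u v = 0 := by
  rw [transferMatrix, of_apply, if_neg h.not_ge]

theorem transferMatrix_comp_swap_apply_of_ne (t : R) (a : Fin (m + 1) → R) (k : Fin m)
    {u v : Fin (m + 1)} (hu : u ≠ k.succ) (hv : v ≠ k.castSucc) :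
    transferMatrix t (a ∘ swap k.castSucc k.succ) u v = transferMatrix t a u v := by
  rcases le_or_gt u v with huv | hvu
  · rw [transferMatrix_apply_of_le _ _ huv, transferMatrix_apply_of_le _ _ huv]
    exact congrArg₂ (· * ·) (Fin.prod_Iio_comp_swap (fun i => t - a i) k hu)
      (Fin.prod_Ioi_comp_swap (fun i => t - a i) k hv)
  · rw [transferMatrix_apply_of_lt _ _ hvu, transferMatrix_apply_of_lt _ _ hvu]

theorem transferMatrix_comp_swap_mul (t : R) (a : Fin (m + 1) → R) (k : Fin m) :
    transferMatrix t (a ∘ swap k.castSucc k.succ) *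
        transvection k.succ k.castSucc (a k.castSucc - a k.succ) =
      transvection k.succ k.castSucc (a k.castSucc - a k.succ) * transferMatrix t a := by
  set τ := swap k.castSucc k.succ
  have hL : ∀ u, u ≠ k.succ → ∏ i ∈ Iio u, (t - (a ∘ τ) i) = ∏ i ∈ Iio u, (t - a i) :=
    fun u hu => Fin.prod_Iio_comp_swap (fun i => t - a i) k hu
  have hR : ∀ v, v ≠ k.castSucc → ∏ i ∈ Ioi v, (t - (a ∘ τ) i) = ∏ i ∈ Ioi v, (t - a i) :=
    fun v hv => Fin.prod_Ioi_comp_swap (fun i => t - a i) k hv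
  have hlt : k.castSucc < k.succ := Fin.castSucc_lt_succ
  ext u v
  simp only [transvection, Matrix.mul_add, Matrix.add_mul, Matrix.mul_one, Matrix.one_mul,
    Matrix.add_apply]
  -- Away from row `k.succ` and column `k.castSucc` nothing moves; the three remaining cases come
  -- down to `(t - a k.castSucc) + (a k.castSucc - a k.succ) = t - a k.succ`.
  rcases eq_or_ne v k.castSucc with rfl | hv <;> rcases eq_or_ne u k.succ with rfl | hu
  · rw [mul_single_apply_same, single_mul_apply_same, transferMatrix_apply_of_lt _ _ hlt,
      transferMatrix_apply_of_lt _ _ hlt, transferMatrix_apply_of_le _ _ le_rfl,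
      transferMatrix_apply_of_le _ _ le_rfl, Fin.prod_Iio_succ, hL _ hlt.ne, hR _ hlt.ne',
      Fin.prod_Ioi_castSucc]
    simp only [τ, Function.comp_apply, swap_apply_left]
    ring
  · rw [mul_single_apply_same, single_mul_apply_of_ne _ _ _ _ _ hu]
    rcases le_or_gt u k.castSucc with h | h
    · rw [transferMatrix_apply_of_le _ _ h, transferMatrix_apply_of_le _ _ h,
        transferMatrix_apply_of_le _ _ (h.trans hlt.le), hL u hu, Fin.prod_Ioi_castSucc,
        Fin.prod_Ioi_castSucc, hR _ hlt.ne']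
      simp only [τ, Function.comp_apply, swap_apply_right]
      ring
    · have h' : k.succ < u := lt_of_le_of_ne (Fin.castSucc_lt_iff_succ_le.1 h) hu.symm
      rw [transferMatrix_apply_of_lt _ _ h, transferMatrix_apply_of_lt _ _ h,
        transferMatrix_apply_of_lt _ _ h']
      ring
  · rw [mul_single_apply_of_ne _ _ _ _ _ hv, single_mul_apply_same]
    rcases le_or_gt k.succ v with h | h
    · rw [transferMatrix_apply_of_le _ _ h, transferMatrix_apply_of_le _ _ h,
        transferMatrix_apply_of_le _ _ (hlt.le.trans h), hR v hv, Fin.prod_Iio_succ,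
        Fin.prod_Iio_succ, hL _ hlt.ne]
      simp only [τ, Function.comp_apply, swap_apply_left]
      ring
    · have h' : v < k.castSucc := lt_of_le_of_ne (Fin.le_castSucc_iff.2 h) hv
      rw [transferMatrix_apply_of_lt _ _ h, transferMatrix_apply_of_lt _ _ h,
        transferMatrix_apply_of_lt _ _ h']
      ring
  · rw [mul_single_apply_of_ne _ _ _ _ _ hv, single_mul_apply_of_ne _ _ _ _ _ hu, add_zero,
      add_zero, transferMatrix_comp_swap_apply_of_ne t a k hu hv]

def transferProduct {r : ℕ} (t : Fin r → R) (a : Fin n → R) : Matrix (Fin n) (Fin n) R :=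
  (List.ofFn fun j => transferMatrix (t j) a).prod

theorem transferProduct_comp_perm_apply {r : ℕ} (t : Fin r → R) (a : Fin (m + 1) → R)
    (σ : Perm (Fin (m + 1))) :
    transferProduct t (a ∘ σ) 0 (Fin.last m) = transferProduct t a 0 (Fin.last m) := by
  have hσ : σ ∈ Submonoid.closure (Set.range fun k : Fin m => swap k.castSucc k.succ) := by
    rw [Perm.mclosure_swap_castSucc_succ]
    trivial
  induction hσ using Submonoid.closure_induction generalizing a with
  | mem τ hτ =>
    obtain ⟨k, rfl⟩ := hτ
    exact Matrix.apply_eq_of_mul_transvection_eq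
      (SemiconjBy.list_prod_ofFn fun j => (transferMatrix_comp_swap_mul (t j) a k).symm).symm
      (Fin.succ_ne_zero k).symm (Fin.castSucc_lt_last k).ne'
  | one => rfl
  | mul x y _ _ ihx ihy => exact (ihy (a ∘ x)).trans (ihx a)

end TransferMatrix

theorem fa_eq_transferProduct_apply (F : Type*) [CommRing F] (r m : ℕ) (α : Fin (m + 1) → F) :
    fa F r (m + 1) α = transferProduct (fun j => MvPolynomial.X j)
      (fun i => MvPolynomial.C (α i)) 0 (Fin.last m) := by
  set chains := univ.filter fun c : Fin (r + 1) → Fin (m + 1) =>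
    c 0 = 0 ∧ c (Fin.last r) = Fin.last m
  have hchains : univ.filter (fun c : Fin (r + 1) → Fin (m + 1) => (∀ i j, i ≤ j → c i ≤ c j) ∧
      (c 0 : ℕ) = 0 ∧ (c (Fin.last r) : ℕ) = m + 1 - 1) = chains.filter Monotone := by
    ext c
    simp only [chains, mem_filter, mem_univ, true_and, Fin.ext_iff, Fin.val_zero,
      Fin.val_last, add_tsub_cancel_right, Monotone]
    exact and_comm
  rw [transferProduct, Matrix.list_prod_ofFn_apply_s6, fa, hchains]
  refine (sum_congr rfl fun c hc => prod_congr rfl fun j _ => ?_).trans (sum_filter_of_ne ?_)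
  · rw [transferMatrix, of_apply, if_pos ((mem_filter.1 hc).2 (Fin.castSucc_le_succ j))]
  · intro c _ hne
    rw [Fin.monotone_iff_le_succ]
    by_contra! hc
    obtain ⟨j, hj⟩ := hc
    exact hne (prod_eq_zero (mem_univ j) (transferMatrix_apply_of_lt _ _ hj))

theorem fa_root_order_independent_general (F : Type*) [Field F] (r n : ℕ)
    (α : Fin n → F) (σ : Equiv.Perm (Fin n)) :
    fa F r n (α ∘ σ) = fa F r n α := by
  cases n with
  | zero => rw [show α ∘ σ = α from funext fun i => i.elim0]
  | succ m =>
    rw [fa_eq_transferProduct_apply, fa_eq_transferProduct_apply]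
    exact transferProduct_comp_perm_apply (fun j => MvPolynomial.X j)
      (fun i => MvPolynomial.C (α i)) σ

theorem fa_root_order_independent (F : Type*) [Field F] (r n : ℕ) (hn : 1 ≤ n)
    (α : Fin n → F) (σ : Equiv.Perm (Fin n)) :
    fa F r n (α ∘ σ) = fa F r n α :=
  fa_root_order_independent_general F r n α σ
end
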